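/- arXiv:1504.00631 — 3 statements merged into one kernel-verified Lean document; each statement's English description precedes it below -/
import Mathlib

section
/- Let 𝒟 be a finite subset of ℂ with 0 ∈ 𝒟 and 𝒟 ≠ {0}, and let d* = min{|a| : a ∈ 𝒟, a ≠ 0}. Then for every r ∈ (0,1) there exists a natural number k_r ≥ 1 such that for every n ∈ ℕ, every nonzero polynomial p of degree ≤ n all of whose coefficients lie in 𝒟, every ρ ∈ (0,r), and every ε > 0, the set {λ ∈ ℂ : ρ < |λ| < r and |p(λ)| < εⁿ} can be covered by at most k_r closed disks of radius d*^{-1/k_r}·(2ε/(ρ(1−r)))^{n/k_r}. -/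
open MeasureTheory Set Filter Metric
open scoped ENNReal NNReal Topology

noncomputable section

/-- `ν` is *the* self-similar measure on `ℂ` for the IFS `(z ↦ λ z + aᵢ)_{i∈Λ}` with
weights `p`, characterized as the (unique) Borel probability measure satisfying
`ν = ∑ i, pᵢ • (fᵢ)_* ν` where `fᵢ z = λ z + aᵢ`. -/
def IsSelfSimilarMeasure {Λ : Type*} [Fintype Λ] (lam : ℂ) (a : Λ → ℂ) (p : Λ → ℝ)
    (ν : Measure ℂ) : Prop :=
  IsProbabilityMeasure ν ∧
    ν = ∑ i : Λ, ENNReal.ofReal (p i) • ν.map (fun z => lam * z + a i)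

/-- The topological support of a measure on `ℂ`: points all of whose neighborhoods
have positive measure. -/
def msupport (ν : Measure ℂ) : Set ℂ := {x : ℂ | ∀ u ∈ nhds x, ν u ≠ 0}

/-- Entropy `h(p) = -∑ pᵢ log pᵢ` of a probability vector. -/
def entropy {Λ : Type*} [Fintype Λ] (p : Λ → ℝ) : ℝ := -∑ i : Λ, p i * Real.log (p i)

/-- Similarity dimension `s(λ, p) = h(p) / (-log |λ|)`. -/
def simDim {Λ : Type*} [Fintype Λ] (lam : ℂ) (p : Λ → ℝ) : ℝ :=
  entropy p / (-Real.log ‖lam‖)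

/-- Fourier transform of a finite measure on `ℂ`:
`ν̂(ξ) = ∫ e^{2 π i Re(z conj ξ)} dν(z)`. -/
def mft (ν : Measure ℂ) (ξ : ℂ) : ℂ :=
  ∫ z, Complex.exp (2 * Real.pi * Complex.I * (((z * (starRingEnd ℂ) ξ).re : ℝ) : ℂ)) ∂ν

/-- Convolution of two measures on `ℂ`: pushforward of the product under addition. -/
def mconv (μ ν : Measure ℂ) : Measure ℂ :=
  Measure.map (fun q : ℂ × ℂ => q.1 + q.2) (μ.prod ν)

/-- `ν` is absolutely continuous w.r.t. Lebesgue measure on `ℂ` with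
Radon–Nikodym derivative in `L^q`. -/
def ACWithLqDensity (ν : Measure ℂ) (q : ℝ) : Prop :=
  ν ≪ (volume : Measure ℂ) ∧
    MemLp (fun z => (ν.rnDeriv volume z).toReal) (ENNReal.ofReal q) volume

/-- Distance from a real number to the nearest integer. -/
def dni (x : ℝ) : ℝ := |x - round x|

/-- `Δ_n(μ, c)`: the minimal distance between distinct level-`n` cylinders of the
IFS `(z ↦ μ z + c_γ)_{γ∈Γ}`. -/
def Delta {Γ : Type*} [Fintype Γ] (μ : ℂ) (c : Γ → ℂ) (n : ℕ) : ℝ :=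
  sInf {x : ℝ | ∃ i j : Fin n → Γ, i ≠ j ∧
    x = ‖∑ ℓ : Fin n, μ ^ (ℓ : ℕ) * (c (i ℓ) - c (j ℓ))‖}

/-- The (lower Hausdorff) dimension of a measure on `ℂ`:
`dim μ = inf {dim_H A : A Borel, μ A > 0}`. -/
def lowerDim (μ : Measure ℂ) : ℝ≥0∞ :=
  sInf {d : ℝ≥0∞ | ∃ A : Set ℂ, MeasurableSet A ∧ 0 < μ A ∧ d = dimH A}


/-!
Put `s = (1 + r) / 2` and fix `t ∈ (s, 1)`. After dividing `P` by the largest power of `X`, its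
value at `0` is a nonzero digit, so has modulus at least `d*`. Replacing each factor `X - a` with
`‖a‖ ≤ s` by the reflected factor `t² - ā X` multiplies `|P|` on the circle `|w| = t` by exactly
`t` per factor, and there `|P| ≤ M / (1 - t)` with `M` any bound on `‖𝒟‖`. The maximum modulus
principle at `0` then bounds `d* (t / s)^N` by `M / (1 - t)`, where `N` counts the nonzero roots
of `P` in the disk of radius `s`, so `N` is bounded uniformly in `n` and `P`; this gives `k_r`.

The disks are centred at these near roots. A point `λ` of the annulus outside them is at distance
more than the radius `R` from each near root and at distance at least `ρ (1 - r) / 2` from every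
other root, which is `0` or has modulus `> s`. Factoring `P` over its roots gives
`|P(λ)| ≥ d* R^{k_r} (ρ (1 - r) / 2)^n = εⁿ`. If `R ≥ 1` the single disk around `0` suffices.
-/

open Polynomial

theorem Real.rpow_div_natCast_pow {x : ℝ} (hx : 0 ≤ x) (a : ℝ) {k : ℕ} (hk : k ≠ 0) :
    (x ^ (a / k)) ^ k = x ^ a := by
  rw [← Real.rpow_natCast, ← Real.rpow_mul hx, div_mul_cancel₀ _ (Nat.cast_ne_zero.2 hk)]

theorem Multiset.pow_card_le_prod_map₀ {α : Type*} {s : Multiset α} {f : α → ℝ} {a : ℝ}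
    (ha : 0 ≤ a) (h : ∀ x ∈ s, a ≤ f x) : a ^ Multiset.card s ≤ (s.map f).prod := by
  simpa using Multiset.prod_map_le_prod_map₀ (fun _ => a) f (fun _ _ => ha) h

theorem Complex.norm_sq_sub_conj_mul {t : ℝ} {w : ℂ} (hw : ‖w‖ = t) (a : ℂ) :
    ‖(t : ℂ) ^ 2 - starRingEnd ℂ a * w‖ = t * ‖w - a‖ := by
  have hww : w * starRingEnd ℂ w = (t : ℂ) ^ 2 := by
    rw [Complex.mul_conj, Complex.normSq_eq_norm_sq, hw]
    push_cast
    ring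
  rw [← hww, show w * starRingEnd ℂ w - starRingEnd ℂ a * w = w * starRingEnd ℂ (w - a) by
    rw [map_sub]; ring, norm_mul, RingHomIsometric.norm_map, hw]

theorem mul_one_sub_div_two_le_norm_sub {z a : ℂ} {ρ r : ℝ} (hρz : ρ < ‖z‖) (hzr : ‖z‖ < r)
    (hr : r < 1) (ha : ¬(a ≠ 0 ∧ ‖a‖ ≤ (1 + r) / 2)) : ρ * (1 - r) / 2 ≤ ‖z - a‖ := by
  have hz0 := norm_nonneg z
  rcases eq_or_ne a 0 with rfl | ha0
  · rw [sub_zero]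
    nlinarith
  · have hza : ‖a‖ - ‖z‖ ≤ ‖z - a‖ := norm_sub_rev a z ▸ norm_sub_norm_le a z
    nlinarith [not_le.1 (not_and.1 ha ha0)]

namespace Polynomial

theorem norm_eval_le_of_norm_coeff_le {𝕜 : Type*} [NormedDivisionRing 𝕜] {Q : 𝕜[X]} {M : ℝ}
    (hM : ∀ j, ‖Q.coeff j‖ ≤ M) {w : 𝕜} (hw : ‖w‖ < 1) : ‖Q.eval w‖ ≤ M / (1 - ‖w‖) := by
  have hM0 : 0 ≤ M := (norm_nonneg _).trans (hM 0)
  have hgeom : ∑ j ∈ Finset.range (Q.natDegree + 1), ‖w‖ ^ j ≤ 1 / (1 - ‖w‖) := by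
    have := geom_sum_Ico_le_of_lt_one (m := 0) (n := Q.natDegree + 1) (norm_nonneg w) hw
    rwa [← Finset.range_eq_Ico, pow_zero] at this
  rw [eval_eq_sum_range]
  calc ‖∑ j ∈ Finset.range (Q.natDegree + 1), Q.coeff j * w ^ j‖
      ≤ ∑ j ∈ Finset.range (Q.natDegree + 1), M * ‖w‖ ^ j := by
        refine (norm_sum_le _ _).trans (Finset.sum_le_sum fun j _ => ?_)
        rw [norm_mul, norm_pow]
        exact mul_le_mul_of_nonneg_right (hM j) (by positivity)
    _ ≤ M * (1 / (1 - ‖w‖)) := by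
        rw [← Finset.mul_sum]
        exact mul_le_mul_of_nonneg_left hgeom hM0
    _ = M / (1 - ‖w‖) := mul_one_div _ _

theorem norm_eval_multiset_prod {𝕜 : Type*} [NormedField 𝕜] {ι : Type*}
    (N : Multiset ι) (f : ι → 𝕜[X]) (w : 𝕜) :
    ‖(N.map f).prod.eval w‖ = (N.map fun a => ‖(f a).eval w‖).prod := by
  rw [eval_multiset_prod, ← normHom_apply, map_multiset_prod, Multiset.map_map,
    Multiset.map_map]
  rfl

theorem norm_eval_zero_le_of_forall_norm_eq {F : ℂ[X]} {t A : ℝ} (ht : 0 < t)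
    (hA : ∀ w : ℂ, ‖w‖ = t → ‖F.eval w‖ ≤ A) : ‖F.eval 0‖ ≤ A := by
  refine Complex.norm_le_of_forall_mem_frontier_norm_le isBounded_ball
    F.differentiable.diffContOnCl (fun w hw => hA w ?_) (subset_closure (mem_ball_self ht))
  simpa [frontier_ball (0 : ℂ) ht.ne'] using hw

theorem norm_eval_zero_mul_pow_le {N : Multiset ℂ} {B : ℂ[X]} {t A : ℝ} (ht : 0 < t)
    (hA : ∀ w : ℂ, ‖w‖ = t → ‖((N.map fun a => X - C a).prod * B).eval w‖ ≤ A) :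
    ‖B.eval 0‖ * t ^ Multiset.card N ≤ A := by
  set F : ℂ[X] := B * (N.map fun a => C ((t : ℂ) ^ 2) - C (starRingEnd ℂ a) * X).prod
  have hF : ∀ w, ‖F.eval w‖ =
      ‖B.eval w‖ * (N.map fun a => ‖(t : ℂ) ^ 2 - starRingEnd ℂ a * w‖).prod := by
    intro w
    rw [eval_mul, norm_mul, norm_eval_multiset_prod]
    simp
  have hQ : ∀ w, ‖((N.map fun a => X - C a).prod * B).eval w‖ =
      (N.map fun a => ‖w - a‖).prod * ‖B.eval w‖ := by
    intro w
    rw [eval_mul, norm_mul, norm_eval_multiset_prod]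
    simp
  have hsphere : ∀ w : ℂ, ‖w‖ = t → ‖F.eval w‖ ≤ t ^ Multiset.card N * A := by
    intro w hw
    rw [hF, Multiset.map_congr rfl fun a _ => Complex.norm_sq_sub_conj_mul hw a,
      Multiset.prod_map_mul, Multiset.map_const', Multiset.prod_replicate]
    calc ‖B.eval w‖ * (t ^ Multiset.card N * (N.map fun a => ‖w - a‖).prod)
        = t ^ Multiset.card N * ((N.map fun a => ‖w - a‖).prod * ‖B.eval w‖) := by ring
      _ ≤ t ^ Multiset.card N * A := by
        rw [← hQ]
        exact mul_le_mul_of_nonneg_left (hA w hw) (by positivity)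
  have hcenter : ‖F.eval 0‖ = ‖B.eval 0‖ * (t ^ Multiset.card N) ^ 2 := by
    rw [hF]
    simp [Complex.norm_real, abs_of_pos ht, ← pow_mul, mul_comm]
  have hmax := norm_eval_zero_le_of_forall_norm_eq ht hsphere
  rw [hcenter] at hmax
  refine le_of_mul_le_mul_left ?_ (pow_pos ht (Multiset.card N))
  linear_combination hmax

theorem norm_eval_zero_mul_pow_card_roots_le {Q : ℂ[X]} {M s t : ℝ}
    (hM : ∀ j, ‖Q.coeff j‖ ≤ M) (hs : 0 < s) (hst : s < t) (ht : t < 1) :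
    ‖Q.eval 0‖ * (t / s) ^ Multiset.card (Q.roots.filter (‖·‖ ≤ s)) ≤ M / (1 - t) := by
  set N := Q.roots.filter (‖·‖ ≤ s)
  obtain ⟨B, hB⟩ : (N.map fun a => X - C a).prod ∣ Q :=
    (Multiset.prod_dvd_prod_of_le (Multiset.map_le_map (Multiset.filter_le _ _))).trans
      (prod_multiset_X_sub_C_dvd Q)
  have hB0 : ‖B.eval 0‖ * t ^ Multiset.card N ≤ M / (1 - t) :=
    norm_eval_zero_mul_pow_le (hs.trans hst) fun w hw => by
      simpa [← hB, hw] using norm_eval_le_of_norm_coeff_le hM (hw ▸ ht : ‖w‖ < 1)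
  have hN0 : (N.map fun a => ‖(X - C a).eval 0‖).prod ≤ s ^ Multiset.card N :=
    calc (N.map fun a => ‖(X - C a).eval 0‖).prod ≤ (N.map fun _ => s).prod :=
          Multiset.prod_map_le_prod_map₀ _ _ (fun _ _ => norm_nonneg _) fun a ha => by
            simpa using (Multiset.mem_filter.1 ha).2
      _ = s ^ Multiset.card N := by simp
  calc ‖Q.eval 0‖ * (t / s) ^ Multiset.card N
      ≤ s ^ Multiset.card N * ‖B.eval 0‖ * (t / s) ^ Multiset.card N := by
        refine mul_le_mul_of_nonneg_right ?_ (pow_nonneg (div_pos (hs.trans hst) hs).le _)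
        rw [hB, eval_mul, norm_mul, norm_eval_multiset_prod]
        exact mul_le_mul_of_nonneg_right hN0 (norm_nonneg _)
    _ = ‖B.eval 0‖ * t ^ Multiset.card N := by
        rw [div_pow]
        field_simp
    _ ≤ M / (1 - t) := hB0

theorem norm_trailingCoeff_mul_pow_card_roots_le {P : ℂ[X]} (hP : P ≠ 0) {M s t : ℝ}
    (hM : ∀ j, ‖P.coeff j‖ ≤ M) (hs : 0 < s) (hst : s < t) (ht : t < 1) :
    ‖P.trailingCoeff‖ * (t / s) ^ Multiset.card (P.roots.filter fun z => z ≠ 0 ∧ ‖z‖ ≤ s) ≤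
      M / (1 - t) := by
  set m := P.natTrailingDegree
  obtain ⟨Q, hPQ⟩ : X ^ m ∣ P :=
    X_pow_dvd_iff.2 fun _ => coeff_eq_zero_of_lt_natTrailingDegree
  have hQcoeff : ∀ j, Q.coeff j = P.coeff (j + m) := fun j => by
    rw [hPQ, coeff_X_pow_mul]
  have hQ0 : Q.eval 0 = P.trailingCoeff := by
    rw [← coeff_zero_eq_eval_zero, hQcoeff, zero_add]
    rfl
  have hroots : P.roots = m • {0} + Q.roots := by
    rw [hPQ, roots_mul (hPQ ▸ hP), roots_X_pow]
  have hfilter : P.roots.filter (fun z => z ≠ 0 ∧ ‖z‖ ≤ s) ≤ Q.roots.filter (‖·‖ ≤ s) := by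
    rw [hroots, Multiset.filter_add, Multiset.nsmul_singleton,
      Multiset.filter_eq_nil.2 fun a ha h => h.1 (Multiset.eq_of_mem_replicate ha), zero_add]
    exact Multiset.monotone_filter_right _ fun _ h => h.2
  calc ‖P.trailingCoeff‖ * (t / s) ^ Multiset.card (P.roots.filter fun z => z ≠ 0 ∧ ‖z‖ ≤ s)
      ≤ ‖Q.eval 0‖ * (t / s) ^ Multiset.card (Q.roots.filter (‖·‖ ≤ s)) := by
        rw [hQ0]
        exact mul_le_mul_of_nonneg_left (pow_le_pow_right₀ ((one_lt_div hs).2 hst).le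
          (Multiset.card_le_card hfilter)) (norm_nonneg _)
    _ ≤ M / (1 - t) :=
        norm_eval_zero_mul_pow_card_roots_le (fun j => hQcoeff j ▸ hM _) hs hst ht

theorem norm_leadingCoeff_mul_pow_mul_pow_le_norm_eval (P : ℂ[X]) (p : ℂ → Prop)
    [DecidablePred p] {z : ℂ} {R c : ℝ} (hR : 0 ≤ R) (hc : 0 ≤ c)
    (hnear : ∀ a ∈ P.roots, p a → R ≤ ‖z - a‖) (hfar : ∀ a ∈ P.roots, ¬p a → c ≤ ‖z - a‖) :
    ‖P.leadingCoeff‖ * (R ^ Multiset.card (P.roots.filter p) *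
      c ^ Multiset.card (P.roots.filter fun a => ¬p a)) ≤ ‖P.eval z‖ := by
  have hsplit : ‖P.eval z‖ = ‖P.leadingCoeff‖ * (P.roots.map fun a => ‖z - a‖).prod := by
    conv_lhs =>
      rw [← C_leadingCoeff_mul_prod_multiset_X_sub_C (p := P) IsAlgClosed.card_roots_eq_natDegree]
    rw [eval_mul, norm_mul, eval_C, norm_eval_multiset_prod]
    simp
  rw [hsplit]
  nth_rewrite 3 [← Multiset.filter_add_not p P.roots]
  rw [Multiset.map_add, Multiset.prod_add]
  have hnear' := Multiset.pow_card_le_prod_map₀ hR fun a ha =>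
    hnear a (Multiset.mem_of_mem_filter ha) (Multiset.mem_filter.1 ha).2
  have hfar' := Multiset.pow_card_le_prod_map₀ hc fun a ha =>
    hfar a (Multiset.mem_of_mem_filter ha) (Multiset.mem_filter.1 ha).2
  exact mul_le_mul_of_nonneg_left
    (mul_le_mul hnear' hfar' (pow_nonneg hc _) ((pow_nonneg hR _).trans hnear')) (norm_nonneg _)

end Polynomial

theorem mul_pow_mul_pow_le_norm_eval {P : ℂ[X]} {n k : ℕ} {dstar r ρ R : ℝ} {z : ℂ}
    (hdeg : P.natDegree ≤ n) (hlead : dstar ≤ ‖P.leadingCoeff‖)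
    (hcount : Multiset.card (P.roots.filter fun a => a ≠ 0 ∧ ‖a‖ ≤ (1 + r) / 2) ≤ k)
    (hR0 : 0 ≤ R) (hR1 : R ≤ 1) (hρ : 0 ≤ ρ) (hρz : ρ < ‖z‖) (hzr : ‖z‖ < r) (hr : r < 1)
    (hz : ∀ a ∈ P.roots.filter fun a => a ≠ 0 ∧ ‖a‖ ≤ (1 + r) / 2, R ≤ ‖z - a‖) :
    dstar * R ^ k * (ρ * (1 - r) / 2) ^ n ≤ ‖P.eval z‖ := by
  have hc0 : 0 ≤ ρ * (1 - r) / 2 := by nlinarith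
  have hc1 : ρ * (1 - r) / 2 ≤ 1 := by nlinarith [norm_nonneg z]
  have hfar_card : Multiset.card (P.roots.filter fun a => ¬(a ≠ 0 ∧ ‖a‖ ≤ (1 + r) / 2)) ≤ n :=
    (Multiset.card_le_card (Multiset.filter_le _ _)).trans ((card_roots' P).trans hdeg)
  calc dstar * R ^ k * (ρ * (1 - r) / 2) ^ n
      ≤ ‖P.leadingCoeff‖ * (R ^ Multiset.card (P.roots.filter fun a => a ≠ 0 ∧ ‖a‖ ≤ (1 + r) / 2) *
          (ρ * (1 - r) / 2) ^ Multiset.card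
            (P.roots.filter fun a => ¬(a ≠ 0 ∧ ‖a‖ ≤ (1 + r) / 2))) := by
        rw [mul_assoc]
        exact mul_le_mul hlead (mul_le_mul (pow_le_pow_of_le_one hR0 hR1 hcount)
          (pow_le_pow_of_le_one hc0 hc1 hfar_card) (pow_nonneg hc0 _) (pow_nonneg hR0 _))
          (by positivity) (norm_nonneg _)
    _ ≤ ‖P.eval z‖ :=
        norm_leadingCoeff_mul_pow_mul_pow_le_norm_eval P _ hR0 hc0
          (fun a ha hnear => hz a (Multiset.mem_filter.2 ⟨ha, hnear⟩))
          fun a _ ha => mul_one_sub_div_two_le_norm_sub hρz hzr hr ha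

theorem exists_finset_card_le_subset_biUnion_closedBall {P : ℂ[X]} {n k : ℕ} {dstar r ρ ε : ℝ}
    (hdeg : P.natDegree ≤ n) (hk : k ≠ 0) (hd : 0 < dstar) (hlead : dstar ≤ ‖P.leadingCoeff‖)
    (hcount : Multiset.card (P.roots.filter fun a => a ≠ 0 ∧ ‖a‖ ≤ (1 + r) / 2) ≤ k)
    (hρ : 0 < ρ) (hr : r < 1) (hε : 0 < ε) :
    ∃ S : Finset ℂ, S.card ≤ k ∧ {z : ℂ | ρ < ‖z‖ ∧ ‖z‖ < r ∧ ‖P.eval z‖ < ε ^ n} ⊆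
      ⋃ c ∈ S, closedBall c (dstar ^ (-(1 : ℝ) / k) * (2 * ε / (ρ * (1 - r))) ^ ((n : ℝ) / k)) := by
  set y := 2 * ε / (ρ * (1 - r))
  set R := dstar ^ (-(1 : ℝ) / k) * y ^ ((n : ℝ) / k)
  have h1r : 0 < 1 - r := by linarith
  have hy : 0 < y := by positivity
  rcases le_or_gt 1 R with hR1 | hR1
  · refine ⟨{0}, by simpa using Nat.one_le_iff_ne_zero.2 hk, fun z hz => ?_⟩
    simp only [mem_iUnion, Finset.mem_singleton, mem_closedBall, dist_zero_right, exists_prop,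
      exists_eq_left]
    linarith [hz.2.1]
  refine ⟨(P.roots.filter _).toFinset, (Multiset.toFinset_card_le _).trans hcount, ?_⟩
  rintro z ⟨hρz, hzr, hPz⟩
  by_contra hz
  simp only [mem_iUnion, mem_closedBall, Multiset.mem_toFinset, exists_prop, not_exists, not_and,
    not_le, dist_eq_norm] at hz
  have hRk : R ^ k = y ^ n / dstar := by
    rw [mul_pow, Real.rpow_div_natCast_pow hd.le _ hk, Real.rpow_div_natCast_pow hy.le _ hk,
      Real.rpow_neg_one, Real.rpow_natCast, div_eq_mul_inv, mul_comm]
  have hεn : dstar * R ^ k * (ρ * (1 - r) / 2) ^ n = ε ^ n := by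
    rw [hRk, mul_div_cancel₀ _ hd.ne', ← mul_pow]
    congr 1
    simp only [y]
    field_simp
  have := mul_pow_mul_pow_le_norm_eval hdeg hlead hcount
    (mul_nonneg (Real.rpow_nonneg hd.le _) (Real.rpow_nonneg hy.le _)) hR1.le hρ.le hρz hzr hr
    fun a ha => (hz a ha).le
  linarith

theorem polynomial_small_value_cover_general (D : Finset ℂ)
    (dstar : ℝ) (hdstar : IsLeast {x : ℝ | ∃ d ∈ D, d ≠ 0 ∧ ‖d‖ = x} dstar)
    (r : ℝ) (hr0 : 0 < r) (hr1 : r < 1) :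
    ∃ kr : ℕ, 1 ≤ kr ∧
      ∀ (n : ℕ) (P : Polynomial ℂ), P ≠ 0 → P.natDegree ≤ n → (∀ j, P.coeff j ∈ D) →
        ∀ ρ : ℝ, 0 < ρ → ρ < r → ∀ ε : ℝ, 0 < ε →
          ∃ s : Finset ℂ, s.card ≤ kr ∧
            {z : ℂ | ρ < ‖z‖ ∧ ‖z‖ < r ∧ ‖P.eval z‖ < ε ^ n} ⊆
              ⋃ c ∈ s, Metric.closedBall c
                (dstar ^ (-(1 : ℝ) / kr) * (2 * ε / (ρ * (1 - r))) ^ ((n : ℝ) / kr)) := by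
  obtain ⟨d₀, -, hd₀, hd₀dstar⟩ := hdstar.1
  have hd : 0 < dstar := hd₀dstar ▸ norm_pos_iff.2 hd₀
  have hMD : ∀ x ∈ D, ‖x‖ ≤ ∑ y ∈ D, ‖y‖ := fun x hx =>
    Finset.single_le_sum (fun y _ => norm_nonneg y) hx
  have hs : 0 < (1 + r) / 2 := by linarith
  have hst : (1 + r) / 2 < (3 + r) / 4 := by linarith
  have ht : (3 + r) / 4 < 1 := by linarith
  have hts : 1 < (3 + r) / 4 / ((1 + r) / 2) := (one_lt_div hs).2 hst
  obtain ⟨K, hK⟩ := pow_unbounded_of_one_lt ((∑ y ∈ D, ‖y‖) / (1 - (3 + r) / 4) / dstar) hts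
  refine ⟨K + 1, le_add_self, fun n P hP hdeg hcoef ρ hρ hρr ε hε => ?_⟩
  have hcount : Multiset.card (P.roots.filter fun z => z ≠ 0 ∧ ‖z‖ ≤ (1 + r) / 2) ≤ K + 1 := by
    have htrail : dstar ≤ ‖P.trailingCoeff‖ :=
      hdstar.2 ⟨_, hcoef _, trailingCoeff_nonzero_iff_nonzero.2 hP, rfl⟩
    have hroots := norm_trailingCoeff_mul_pow_card_roots_le hP (fun j => hMD _ (hcoef j)) hs hst ht
    refine (((pow_lt_pow_iff_right₀ hts).1 (lt_of_le_of_lt ?_ hK)).le).trans K.le_succ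
    rw [le_div_iff₀ hd, mul_comm]
    exact (mul_le_mul_of_nonneg_right htrail (pow_nonneg (zero_le_one.trans hts.le) _)).trans hroots
  exact exists_finset_card_le_subset_biUnion_closedBall hdeg K.succ_ne_zero hd
    (hdstar.2 ⟨_, hcoef _, leadingCoeff_ne_zero.2 hP, rfl⟩) hcount hρ hr1 hε

/-- **Lemma 3.4.** Let `𝒟 ⊆ ℂ` be finite with `0 ∈ 𝒟`, `𝒟 ≠ {0}`, and let
`d* = min {|a| : a ∈ 𝒟, a ≠ 0}`. For every `r ∈ (0,1)` there is `k_r ≥ 1` such that for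
every `n`, every nonzero polynomial `P` of degree `≤ n` with coefficients in `𝒟`, every
`ρ ∈ (0,r)` and every `ε > 0`, the set `{λ : ρ < |λ| < r, |P(λ)| < εⁿ}` can be covered by
at most `k_r` closed disks of radius `d*^{-1/k_r} (2ε/(ρ(1-r)))^{n/k_r}`. -/
theorem polynomial_small_value_cover (D : Finset ℂ) (h0 : (0 : ℂ) ∈ D)
    (hne : ∃ d ∈ D, d ≠ 0)
    (dstar : ℝ) (hdstar : IsLeast {x : ℝ | ∃ d ∈ D, d ≠ 0 ∧ ‖d‖ = x} dstar)
    (r : ℝ) (hr0 : 0 < r) (hr1 : r < 1) :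
    ∃ kr : ℕ, 1 ≤ kr ∧
      ∀ (n : ℕ) (P : Polynomial ℂ), P ≠ 0 → P.natDegree ≤ n → (∀ j, P.coeff j ∈ D) →
        ∀ ρ : ℝ, 0 < ρ → ρ < r → ∀ ε : ℝ, 0 < ε →
          ∃ s : Finset ℂ, s.card ≤ kr ∧
            {z : ℂ | ρ < ‖z‖ ∧ ‖z‖ < r ∧ ‖P.eval z‖ < ε ^ n} ⊆
              ⋃ c ∈ s, Metric.closedBall c
                (dstar ^ (-(1 : ℝ) / kr) * (2 * ε / (ρ * (1 - r))) ^ ((n : ℝ) / kr)) :=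
  polynomial_small_value_cover_general D dstar hdstar r hr0 hr1
end
end

section
/- Let 𝒟 be a finite subset of ℂ containing at least one nonzero element. For every r ∈ (0,1) there exists k_r ∈ ℕ such that every power series f(z) = ∑_{j=0}^∞ a_j z^j with a_j ∈ 𝒟 for all j and a_0 ≠ 0 (such a series converges on the open unit disk, since its coefficients are bounded) has at most k_r zeros, counted with multiplicity, in the closed disk {z ∈ ℂ : |z| ≤ (r+1)/2}. -/
/-! A power series `f` with coefficients in the finite set `D` is bounded on the circle
`‖z‖ = R < 1` by `M = max 1 (C / (1 - R))` with `C = ∑ d ∈ D, ‖d‖`, while `‖f 0‖ = ‖a 0‖` is at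
least the smallest norm `δ` of a nonzero element of `D`. Jensen's inequality bounds the number of
zeros of `f` in the disk of radius `ρ < R`, counted with multiplicity, by
`log (M / ‖f 0‖) / log (R / ρ) ≤ log (M / δ) / log (R / ρ)`, which does not depend on the
coefficients. -/

open MeasureTheory Set Filter Metric
open scoped ENNReal NNReal Topology

noncomputable section

open Classical in
/-- Order of vanishing of `f` at `z` (junk value `0` if `f` is not analytic at `z`). -/
def zeroOrder (f : ℂ → ℂ) (z : ℂ) : ℕ∞ :=
  if h : AnalyticAt ℂ f z then analyticOrderAt f z else 0

theorem Finset.sum_le_finsum {α M : Type*} [AddCommMonoid M] [PartialOrder M]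
    [IsOrderedAddMonoid M] {f : α → M} (hf : f.support.Finite) (hf₀ : ∀ a, 0 ≤ f a)
    (s : Finset α) : ∑ a ∈ s, f a ≤ ∑ᶠ a, f a := by
  classical
  rw [finsum_eq_sum_of_support_subset f (s := s ∪ hf.toFinset) (by simp)]
  exact Finset.sum_le_sum_of_subset_of_nonneg Finset.subset_union_left fun a _ _ ↦ hf₀ a

theorem Finset.exists_pos_forall_le_norm {E : Type*} [NormedAddCommGroup E] (D : Finset E) :
    ∃ δ > 0, ∀ d ∈ D, d ≠ 0 → δ ≤ ‖d‖ := by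
  classical
  rcases (D.erase 0).eq_empty_or_nonempty with hD | hD
  · exact ⟨1, one_pos, fun d hd hd0 ↦ by simpa [hD] using Finset.mem_erase.2 ⟨hd0, hd⟩⟩
  · obtain ⟨d₀, hd₀, hmin⟩ := (D.erase 0).exists_min_image norm hD
    exact ⟨‖d₀‖, norm_pos_iff.2 (Finset.ne_of_mem_erase hd₀),
      fun d hd hd0 ↦ hmin d (Finset.mem_erase.2 ⟨hd0, hd⟩)⟩

section ZeroOrder

open MeromorphicOn

variable {f : ℂ → ℂ} {U : Set ℂ} {z : ℂ}

theorem AnalyticAt.zeroOrder_eq (hf : AnalyticAt ℂ f z) : zeroOrder f z = analyticOrderAt f z :=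
  dif_pos hf

theorem AnalyticOnNhd.divisor_eq_toNat_zeroOrder (hf : AnalyticOnNhd ℂ f U) (hz : z ∈ U) :
    divisor f U z = (zeroOrder f z).toNat := by
  rw [AnalyticOnNhd.divisor_apply hf hz, (hf z hz).zeroOrder_eq]
  induction analyticOrderAt f z using ENat.recTopCoe <;> simp

theorem AnalyticOnNhd.zeroOrder_ne_top {c : ℂ} (hf : AnalyticOnNhd ℂ f U) (hU : IsPreconnected U)
    (hc : c ∈ U) (hfc : f c ≠ 0) (hz : z ∈ U) : zeroOrder f z ≠ ⊤ := by
  rw [(hf z hz).zeroOrder_eq]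
  exact hf.analyticOrderAt_ne_top_of_isPreconnected hU hc hz
    (by simp [(hf c hc).analyticOrderAt_eq_zero.mpr hfc])

/-- Jensen's inequality, in the form of a bound on the zeros in a finite subset of the disk. -/
theorem AnalyticOnNhd.sum_zeroOrder_le {c : ℂ} {r R M : ℝ} (hr : 0 < r) (hrR : r < R)
    (hM : 1 ≤ M) (hf : AnalyticOnNhd ℂ f (closedBall c R)) (hfc : f c ≠ 0)
    (hbound : ∀ z ∈ sphere c R, ‖f z‖ ≤ M) (s : Finset ℂ) (hs : ∀ z ∈ s, z ∈ closedBall c r) :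
    ∑ z ∈ s, zeroOrder f z ≤ ⌊Real.log (M / ‖f c‖) / Real.log (R / r)⌋₊ := by
  have hR : 0 < R := hr.trans hrR
  have hfr : AnalyticOnNhd ℂ f (closedBall c r) := hf.mono (closedBall_subset_closedBall hrR.le)
  have hcast : ∑ z ∈ s, zeroOrder f z = ((∑ z ∈ s, (zeroOrder f z).toNat : ℕ) : ℕ∞) := by
    rw [Nat.cast_sum]
    refine Finset.sum_congr rfl fun z hz ↦ (ENat.natCast_toNat ?_).symm
    exact hfr.zeroOrder_ne_top (convex_closedBall c r).isPreconnected (mem_closedBall_self hr.le)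
      hfc (hs z hz)
  have hdivisor : ((∑ z ∈ s, (zeroOrder f z).toNat : ℕ) : ℤ)
      ≤ ∑ᶠ u, divisor f (closedBall c r) u := by
    rw [Nat.cast_sum, ← Finset.sum_congr rfl fun z hz ↦ hfr.divisor_eq_toNat_zeroOrder (hs z hz)]
    exact Finset.sum_le_finsum ((divisor f _).finiteSupport (isCompact_closedBall c r))
      (AnalyticOnNhd.divisor_nonneg hfr) s
  have jensen := AnalyticOnNhd.sum_divisor_le (r := r) (R := R) (by rwa [abs_of_pos hr])
    (by rwa [abs_of_pos hr, abs_of_pos hR]) hM (by rwa [abs_of_pos hR]) hfc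
    (by rwa [abs_of_pos hR])
  rw [abs_of_pos hr] at jensen
  rw [hcast, Nat.cast_le]
  exact Nat.le_floor (by exact_mod_cast (Int.cast_le.mpr hdivisor).trans jensen)

end ZeroOrder

section PowerSeries

variable {a : ℕ → ℂ} {C : ℝ}

theorem analyticOnNhd_tsum_mul_pow (ha : ∀ j, ‖a j‖ ≤ C) :
    AnalyticOnNhd ℂ (fun w ↦ ∑' j, a j * w ^ j) (ball 0 1) := by
  set p := FormalMultilinearSeries.ofScalars ℂ a
  have hradius : 1 ≤ p.radius :=
    p.le_radius_of_bound C fun n ↦ by simpa [p, FormalMultilinearSeries.ofScalars_norm] using ha n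
  have hsum : (fun w ↦ ∑' j, a j * w ^ j) = p.sum :=
    FormalMultilinearSeries.ofScalarsSum_eq_tsum a |>.symm
  have := ((p.hasFPowerSeriesOnBall (one_pos.trans_le hradius)).mono one_pos hradius).analyticOnNhd
  rwa [← ENNReal.coe_one, Metric.eball_coe, ← hsum] at this

theorem norm_tsum_mul_pow_le (ha : ∀ j, ‖a j‖ ≤ C) {z : ℂ} (hz : ‖z‖ < 1) :
    ‖∑' j, a j * z ^ j‖ ≤ C / (1 - ‖z‖) := by
  have hC : 0 ≤ C := (norm_nonneg _).trans (ha 0)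
  refine tsum_of_norm_bounded ((hasSum_geometric_of_lt_one (norm_nonneg z) hz).mul_left C)
    fun j ↦ ?_
  rw [norm_mul, norm_pow]
  exact mul_le_mul_of_nonneg_right (ha j) (by positivity)

theorem tsum_mul_zero_pow (a : ℕ → ℂ) : ∑' j, a j * (0 : ℂ) ^ j = a 0 := by
  rw [tsum_eq_single 0 fun j hj ↦ by simp [hj]]
  simp

end PowerSeries

theorem power_series_zeros_bound_general (D : Finset ℂ)
    (r : ℝ) (hr0 : 0 < r) (hr1 : r < 1) :
    ∃ kr : ℕ,
      ∀ a : ℕ → ℂ, (∀ j, a j ∈ D) → a 0 ≠ 0 →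
        ∀ s : Finset ℂ,
          (∀ z ∈ s, ‖z‖ ≤ (r + 1) / 2 ∧ (∑' j : ℕ, a j * z ^ j) = 0) →
          (∑ z ∈ s, zeroOrder (fun w => ∑' j : ℕ, a j * w ^ j) z) ≤ (kr : ℕ∞) := by
  obtain ⟨δ, hδ, hδD⟩ := D.exists_pos_forall_le_norm
  set C := ∑ d ∈ D, ‖d‖
  set ρ := (r + 1) / 2 with hρ_def
  set R := (r + 3) / 4 with hR_def
  set M := max 1 (C / (1 - R))
  have hρ : 0 < ρ := by linarith
  have hρR : ρ < R := by linarith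
  have hR1 : R < 1 := by linarith
  refine ⟨⌊Real.log (M / δ) / Real.log (R / ρ)⌋₊, fun a haD ha0 s hs ↦ ?_⟩
  have hC : ∀ j, ‖a j‖ ≤ C := fun j ↦ Finset.single_le_sum (fun d _ ↦ norm_nonneg d) (haD j)
  have hf := (analyticOnNhd_tsum_mul_pow hC).mono (closedBall_subset_ball hR1)
  have hbound : ∀ z ∈ sphere (0 : ℂ) R, ‖∑' j, a j * z ^ j‖ ≤ M := fun z hz ↦ by
    rw [mem_sphere_zero_iff_norm] at hz
    exact (norm_tsum_mul_pow_le hC (hz ▸ hR1)).trans (hz ▸ le_max_right _ _)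
  have hf0 : ∑' j, a j * (0 : ℂ) ^ j ≠ 0 := tsum_mul_zero_pow a ▸ ha0
  refine (hf.sum_zeroOrder_le hρ hρR (le_max_left _ _) hf0 hbound s
    fun z hz ↦ mem_closedBall_zero_iff.2 (hs z hz).1).trans ?_
  rw [tsum_mul_zero_pow, Nat.cast_le]
  gcongr
  · exact Real.log_nonneg ((one_le_div hρ).2 hρR.le)
  · exact hδD _ (haD 0) ha0

/-- **Uniform bound on zeros of power series with coefficients in a finite set.**
Let `𝒟 ⊆ ℂ` be finite with a nonzero element. For every `r ∈ (0,1)` there is `k_r` such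
that every power series `f(z) = ∑ aⱼ zʲ` with `aⱼ ∈ 𝒟` and `a₀ ≠ 0` has at most `k_r`
zeros, counted with multiplicity, in the closed disk of radius `(r+1)/2`. -/
theorem power_series_zeros_bound (D : Finset ℂ) (hne : ∃ d ∈ D, d ≠ 0)
    (r : ℝ) (hr0 : 0 < r) (hr1 : r < 1) :
    ∃ kr : ℕ,
      ∀ a : ℕ → ℂ, (∀ j, a j ∈ D) → a 0 ≠ 0 →
        ∀ s : Finset ℂ,
          (∀ z ∈ s, ‖z‖ ≤ (r + 1) / 2 ∧ (∑' j : ℕ, a j * z ^ j) = 0) →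
          (∑ z ∈ s, zeroOrder (fun w => ∑' j : ℕ, a j * w ^ j) z) ≤ (kr : ℕ∞) :=
  power_series_zeros_bound_general D r hr0 hr1
end
end

section
/- Let Λ be a finite index set with #Λ ≥ 2, let a = (a_i)_{i∈Λ} ∈ ℂ^Λ, let λ ∈ ℂ with 0 < |λ| < 1, and let k ≥ 2 be an integer. Define b = (b_w)_{w∈Λ^{k−1}} ∈ ℂ^{Λ^{k−1}} by b_w = ∑_{j=0}^{k−2} λ^j a_{w_{j+1}}. Then for every n ≥ 1, Δ_n(λ^k, b) ≥ Δ_{kn}(λ, a). -/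
open MeasureTheory Set Filter Metric
open scoped ENNReal NNReal Topology

noncomputable section

/-!
A word of `n` letters from `Λ^{k-1}` is turned into a word of length `kn` over `Λ` by writing
out each letter and appending a fixed filler letter `x`. This padding is injective, and since
the two padded words agree at every filler position, the difference of their level-`kn` sums
for `λ` is the difference of the original level-`n` sums for `λᵏ`. So every gap counted by
`Δ_n(λᵏ, b)` is also a gap counted by `Δ_{kn}(λ, a)`.
-/

theorem Delta_le_Delta_of_injective {Γ Γ' : Type*} [Fintype Γ] [Fintype Γ'] {μ μ' : ℂ}
    {c : Γ → ℂ} {c' : Γ' → ℂ} {n m : ℕ} [Nontrivial (Fin n → Γ)]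
    (F : (Fin n → Γ) → Fin m → Γ') (hF : Function.Injective F)
    (hsum : ∀ i j : Fin n → Γ, ∑ ℓ : Fin m, μ' ^ (ℓ : ℕ) * (c' (F i ℓ) - c' (F j ℓ)) =
      ∑ ℓ : Fin n, μ ^ (ℓ : ℕ) * (c (i ℓ) - c (j ℓ))) :
    Delta μ' c' m ≤ Delta μ c n := by
  obtain ⟨i, j, hij⟩ := exists_pair_ne (Fin n → Γ)
  refine csInf_le_csInf ⟨0, ?_⟩ ⟨_, i, j, hij, rfl⟩ ?_
  · rintro _ ⟨_, _, _, rfl⟩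
    exact norm_nonneg _
  · rintro _ ⟨i, j, hij, rfl⟩
    exact ⟨F i, F j, hF.ne hij, by rw [hsum]⟩

def blockEquiv (n k : ℕ) : Fin n × Fin k ≃ Fin (k * n) :=
  finProdFinEquiv.trans (finCongr (mul_comm n k))

theorem blockEquiv_val {n k : ℕ} (p : Fin n × Fin k) :
    (blockEquiv n k p : ℕ) = p.2 + k * p.1 := rfl

theorem sum_pow_mul_eq_sum_blocks {R : Type*} [CommSemiring R] (lam : R) {n k : ℕ}
    (f : Fin (k * n) → R) :
    ∑ m : Fin (k * n), lam ^ (m : ℕ) * f m =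
      ∑ ℓ : Fin n, (lam ^ k) ^ (ℓ : ℕ) *
        ∑ j : Fin k, lam ^ (j : ℕ) * f (blockEquiv n k (ℓ, j)) := by
  rw [← (blockEquiv n k).sum_comp, Fintype.sum_prod_type]
  refine Finset.sum_congr rfl fun ℓ _ => ?_
  rw [Finset.mul_sum]
  refine Finset.sum_congr rfl fun j _ => ?_
  rw [blockEquiv_val, pow_add, pow_mul]
  ring

section Padding

variable {Λ : Type*} {n q : ℕ}

def padBlocks (x : Λ) (w : Fin n → Fin q → Λ) : Fin ((q + 1) * n) → Λ := fun m =>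
  let p := (blockEquiv n (q + 1)).symm m
  Fin.snoc (α := fun _ => Λ) (w p.1) x p.2

theorem padBlocks_castSucc (x : Λ) (w : Fin n → Fin q → Λ) (ℓ : Fin n) (j : Fin q) :
    padBlocks x w (blockEquiv n (q + 1) (ℓ, j.castSucc)) = w ℓ j := by
  simp [padBlocks]

theorem padBlocks_last (x : Λ) (w : Fin n → Fin q → Λ) (ℓ : Fin n) :
    padBlocks x w (blockEquiv n (q + 1) (ℓ, Fin.last q)) = x := by
  simp [padBlocks]

theorem padBlocks_injective (x : Λ) : Function.Injective (padBlocks (n := n) (q := q) x) :=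
  fun v w h => funext₂ fun ℓ j => by
    simpa only [padBlocks_castSucc] using congrFun h (blockEquiv n (q + 1) (ℓ, j.castSucc))

theorem sum_padBlocks_sub (a : Λ → ℂ) (lam : ℂ) (x : Λ) (v w : Fin n → Fin q → Λ) :
    ∑ m : Fin ((q + 1) * n), lam ^ (m : ℕ) * (a (padBlocks x v m) - a (padBlocks x w m)) =
      ∑ ℓ : Fin n, (lam ^ (q + 1)) ^ (ℓ : ℕ) *
        (∑ j : Fin q, lam ^ (j : ℕ) * a (v ℓ j) - ∑ j : Fin q, lam ^ (j : ℕ) * a (w ℓ j)) := by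
  rw [sum_pow_mul_eq_sum_blocks]
  refine Finset.sum_congr rfl fun ℓ _ => ?_
  simp only [Fin.sum_univ_castSucc, padBlocks_castSucc, padBlocks_last, sub_self,
    add_zero, Fin.val_castSucc, ← Finset.sum_sub_distrib, mul_sub]

end Padding

theorem Delta_iterate_ge_general {Λ : Type*} [Fintype Λ]
    (hm : 2 ≤ Fintype.card Λ) (a : Λ → ℂ) (lam : ℂ)
    (k : ℕ) (hk : 2 ≤ k) :
    ∀ n : ℕ, 1 ≤ n →
      Delta (lam ^ k)
        (fun w : Fin (k - 1) → Λ => ∑ j : Fin (k - 1), lam ^ (j : ℕ) * a (w j)) n ≥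
      Delta lam a (k * n) := by
  intro n hn
  obtain ⟨q, rfl⟩ : ∃ q, k = q + 1 := ⟨k - 1, by omega⟩
  have : Nontrivial Λ := Fintype.one_lt_card_iff_nontrivial.mp hm
  have : Nonempty (Fin n) := ⟨⟨0, hn⟩⟩
  have : Nonempty (Fin (q + 1 - 1)) := ⟨⟨0, by omega⟩⟩
  obtain ⟨x⟩ : Nonempty Λ := inferInstance
  exact Delta_le_Delta_of_injective (padBlocks x) (padBlocks_injective x)
    (sum_padBlocks_sub a lam x)

/-- **Cylinder separation under iteration.** For `#Λ ≥ 2`, `0 < |λ| < 1` and `k ≥ 2`, with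
`b_w = ∑_{j=0}^{k-2} λʲ a_{w_{j+1}}` for `w ∈ Λ^{k-1}`, one has
`Δ_n(λᵏ, b) ≥ Δ_{kn}(λ, a)` for all `n ≥ 1`. -/
theorem Delta_iterate_ge {Λ : Type*} [Fintype Λ]
    (hm : 2 ≤ Fintype.card Λ) (a : Λ → ℂ) (lam : ℂ)
    (h0 : 0 < ‖lam‖) (h1 : ‖lam‖ < 1) (k : ℕ) (hk : 2 ≤ k) :
    ∀ n : ℕ, 1 ≤ n →
      Delta (lam ^ k)
        (fun w : Fin (k - 1) → Λ => ∑ j : Fin (k - 1), lam ^ (j : ℕ) * a (w j)) n ≥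
      Delta lam a (k * n) :=
  Delta_iterate_ge_general hm a lam k hk
end
end
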